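/- arXiv:2204.08233 — 2 statements merged into one kernel-verified Lean document; each statement's English description precedes it below -/
import Mathlib

section
/- Let A be a commutative ring with only finitely many maximal ideals, let M be an A-module, and let N be a finitely generated A-module. If an A-linear map f : M → N induces a surjection M/𝔪M → N/𝔪N for every maximal ideal 𝔪 of A, then f is surjective. -/
/-!
Pass to the finitely generated quotient `Q = N ⧸ range f`, on which `𝔪 • Q = Q` for every
maximal ideal `𝔪`. Nakayama's lemma then gives, for each `𝔪`, an element `r ≡ 1 mod 𝔪`
annihilating `Q`, so the annihilator of `Q` lies in no maximal ideal and `Q = 0`.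
-/

section

variable {A : Type*} [CommRing A]

theorem Module.subsingleton_of_forall_isMaximal_smul_top_eq_top {Q : Type*} [AddCommGroup Q]
    [Module A Q] [Module.Finite A Q]
    (h : ∀ 𝔪 : Ideal A, 𝔪.IsMaximal → 𝔪 • (⊤ : Submodule A Q) = ⊤) : Subsingleton Q := by
  rw [← Module.annihilator_eq_top_iff (R := A)]
  by_contra hne
  obtain ⟨𝔪, h𝔪, hle⟩ := Ideal.exists_le_maximal _ hne
  obtain ⟨r, hr1, hr⟩ := Submodule.exists_sub_one_mem_and_smul_eq_zero_of_fg_of_le_smul 𝔪 ⊤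
    Module.Finite.fg_top (h 𝔪 h𝔪).ge
  have hr𝔪 : r ∈ 𝔪 := hle (Module.mem_annihilator.mpr fun q ↦ hr q trivial)
  exact h𝔪.ne_top ((Ideal.eq_top_iff_one _).mpr (by simpa using 𝔪.sub_mem hr𝔪 hr1))

theorem Submodule.eq_top_of_forall_isMaximal_sup_smul_top_eq_top {N : Type*} [AddCommGroup N]
    [Module A N] [Module.Finite A N] (P : Submodule A N)
    (h : ∀ 𝔪 : Ideal A, 𝔪.IsMaximal → P ⊔ 𝔪 • (⊤ : Submodule A N) = ⊤) : P = ⊤ := by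
  rw [← Submodule.Quotient.subsingleton_iff]
  refine Module.subsingleton_of_forall_isMaximal_smul_top_eq_top (A := A) fun 𝔪 h𝔪 ↦ ?_
  have hQ := congrArg (Submodule.map P.mkQ) (h 𝔪 h𝔪)
  rwa [Submodule.map_sup, Submodule.map_smul'', Submodule.mkQ_map_self, bot_sup_eq,
    Submodule.map_top, Submodule.range_mkQ] at hQ

end

theorem semilocal_surjective_of_surjective_mod_maximal_general
    {A : Type*} [CommRing A] {M N : Type*} [AddCommGroup M] [Module A M]
    [AddCommGroup N] [Module A N]
    (hN : Module.Finite A N) (f : M →ₗ[A] N)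
    (h : ∀ 𝔪 : Ideal A, 𝔪.IsMaximal →
      LinearMap.range f ⊔ 𝔪 • (⊤ : Submodule A N) = ⊤) :
    Function.Surjective f :=
  LinearMap.range_eq_top.mp ((LinearMap.range f).eq_top_of_forall_isMaximal_sup_smul_top_eq_top h)

/-- **Nakayama-type surjectivity criterion over semilocal rings.**
If `A` is a commutative ring with only finitely many maximal ideals, `N` is a finitely
generated `A`-module, and an `A`-linear map `f : M → N` induces a surjection
`M/𝔪M → N/𝔪N` for every maximal ideal `𝔪` (equivalently, `range f + 𝔪N = N`),
then `f` is surjective. -/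
theorem semilocal_surjective_of_surjective_mod_maximal
    {A : Type*} [CommRing A] {M N : Type*} [AddCommGroup M] [Module A M]
    [AddCommGroup N] [Module A N]
    (hsemilocal : {I : Ideal A | I.IsMaximal}.Finite)
    (hN : Module.Finite A N) (f : M →ₗ[A] N)
    (h : ∀ 𝔪 : Ideal A, 𝔪.IsMaximal →
      LinearMap.range f ⊔ 𝔪 • (⊤ : Submodule A N) = ⊤) :
    Function.Surjective f :=
  semilocal_surjective_of_surjective_mod_maximal_general hN f h
end

section
/- Let R be a commutative ring. Let S ⊂ R[t] be the multiplicative set of monic polynomials, and let R′ = R[x]_{1 + xR[x]} be the localization of R[x] at the multiplicative set 1 + xR[x]. Then the assignment t ↦ x⁻¹ induces a ring isomorphism S⁻¹R[t] ≅ R′[1/x]. -/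
open Polynomial

/-- The multiplicative set of monic polynomials in `R[t]`. -/
def monicSubmonoid (R : Type*) [CommRing R] : Submonoid (Polynomial R) where
  carrier := {f | f.Monic}
  one_mem' := monic_one
  mul_mem' := fun hf hg => hf.mul hg

/-- The multiplicative set `1 + x·R[x]` in `R[x]`. -/
def onePlusXMulSubmonoid (R : Type*) [CommRing R] : Submonoid (Polynomial R) where
  carrier := {f | ∃ g : Polynomial R, f = 1 + X * g}
  one_mem' := ⟨0, by ring⟩
  mul_mem' := by
    rintro a b ⟨g, rfl⟩ ⟨h, rfl⟩
    exact ⟨g + h + X * g * h, by ring⟩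

/-!
Substituting `X ↦ X⁻¹` into a ring in which `X` is invertible is an involution, and
`f(X⁻¹) · X ^ deg f` is the reversal of `f`. Reversal sends monic polynomials to polynomials
with constant term `1`, and `(1 + X g) · Xⁿ` to a monic polynomial. Hence the substitution
carries the denominators of each localization to units of the other, and the two induced maps
are mutually inverse because the substitution is an involution.
-/

open scoped Ring

theorem map_ringInverse_of_isUnit {M N F : Type*} [MonoidWithZero M] [MonoidWithZero N]
    [FunLike F M N] [MonoidHomClass F M N] (ψ : F) {x : M} (hx : IsUnit x) :
    ψ x⁻¹ʳ = (ψ x)⁻¹ʳ := by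
  obtain ⟨u, rfl⟩ := hx
  rw [Ring.inverse_unit]
  exact (Ring.inverse_unit (Units.map (ψ : M →* N) u)).symm

namespace Polynomial

variable {R B : Type*} [CommRing R] [CommRing B]

/-- This is `f ↦ g (f (X⁻¹))` only when `g X` is a unit: `⁻¹ʳ` sends non-units to `0`. -/
noncomputable def substInvX (g : R[X] →+* B) : R[X] →+* B :=
  eval₂RingHom (g.comp C) (g X)⁻¹ʳ

@[simp]
theorem substInvX_C (g : R[X] →+* B) (r : R) : substInvX g (C r) = g (C r) :=
  eval₂_C _ _

@[simp]
theorem substInvX_X (g : R[X] →+* B) : substInvX g X = (g X)⁻¹ʳ :=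
  eval₂_X _ _

theorem substInvX_mul_pow_natDegree {g : R[X] →+* B} (hX : IsUnit (g X)) (f : R[X]) :
    substInvX g f * g X ^ f.natDegree = g f.reverse := by
  let := hX.invertible
  have key := eval₂_reflect_mul_pow (g.comp C) (g X) f.natDegree f.reverse
    (reverse_natDegree_le f)
  rw [reverse, reflect_reflect, ← reverse] at key
  rw [substInvX, coe_eval₂RingHom, Ring.inverse_invertible, key, ← hom_eval₂, eval₂_C_X]

theorem isUnit_substInvX {g : R[X] →+* B} (hX : IsUnit (g X)) {f : R[X]}
    (hf : IsUnit (g f.reverse)) : IsUnit (substInvX g f) :=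
  isUnit_of_mul_isUnit_left (substInvX_mul_pow_natDegree hX f ▸ hf)

theorem comp_substInvX {B' : Type*} [CommRing B'] (ψ : B →+* B') {g : R[X] →+* B}
    (hX : IsUnit (g X)) : ψ.comp (substInvX g) = substInvX (ψ.comp g) :=
  ringHom_ext (fun r => by simp) (by simp [map_ringInverse_of_isUnit ψ hX])

theorem substInvX_substInvX {g : R[X] →+* B} (hX : IsUnit (g X)) :
    substInvX (substInvX g) = g :=
  ringHom_ext (fun r => by simp) (by simp [Ring.inverse_inverse hX])

theorem monic_reverse_of_coeff_zero_eq_one {f : R[X]} (hf : f.coeff 0 = 1) :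
    f.reverse.Monic := by
  nontriviality R
  rw [Monic, reverse_leadingCoeff, trailingCoeff_eq_coeff_zero (by simp [hf]), hf]

section Localization

variable {M N : Submonoid R[X]}

theorem isUnit_substInvX_algebraMap (hXN : X ∈ N) (hMN : ∀ f ∈ M, f.reverse ∈ N) (f : M) :
    IsUnit (substInvX (algebraMap R[X] (Localization N)) f) :=
  isUnit_substInvX (IsLocalization.map_units _ ⟨X, hXN⟩)
    (IsLocalization.map_units _ ⟨_, hMN f f.2⟩)

noncomputable def localizationSubstInvX (hXN : X ∈ N) (hMN : ∀ f ∈ M, f.reverse ∈ N) :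
    Localization M →+* Localization N :=
  IsLocalization.lift (isUnit_substInvX_algebraMap hXN hMN)

theorem localizationSubstInvX_comp_algebraMap (hXN : X ∈ N) (hMN : ∀ f ∈ M, f.reverse ∈ N) :
    (localizationSubstInvX hXN hMN).comp (algebraMap R[X] (Localization M)) =
      substInvX (algebraMap R[X] (Localization N)) :=
  IsLocalization.lift_comp _

theorem localizationSubstInvX_comp_localizationSubstInvX (hXM : X ∈ M) (hXN : X ∈ N)
    (hMN : ∀ f ∈ M, f.reverse ∈ N) (hNM : ∀ f ∈ N, f.reverse ∈ M) :
    (localizationSubstInvX hXM hNM).comp (localizationSubstInvX hXN hMN) = RingHom.id _ :=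
  IsLocalization.ringHom_ext M <| by
    rw [RingHom.comp_assoc, localizationSubstInvX_comp_algebraMap,
      comp_substInvX _ (IsLocalization.map_units _ ⟨X, hXN⟩),
      localizationSubstInvX_comp_algebraMap,
      substInvX_substInvX (IsLocalization.map_units _ ⟨X, hXM⟩), RingHom.id_comp]

noncomputable def localizationSubstInvXEquiv (hXM : X ∈ M) (hXN : X ∈ N)
    (hMN : ∀ f ∈ M, f.reverse ∈ N) (hNM : ∀ f ∈ N, f.reverse ∈ M) :
    Localization M ≃+* Localization N :=
  RingEquiv.ofRingHom (localizationSubstInvX hXN hMN) (localizationSubstInvX hXM hNM)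
    (localizationSubstInvX_comp_localizationSubstInvX hXN hXM hNM hMN)
    (localizationSubstInvX_comp_localizationSubstInvX hXM hXN hMN hNM)

@[simp]
theorem localizationSubstInvXEquiv_algebraMap (hXM : X ∈ M) (hXN : X ∈ N)
    (hMN : ∀ f ∈ M, f.reverse ∈ N) (hNM : ∀ f ∈ N, f.reverse ∈ M) (f : R[X]) :
    localizationSubstInvXEquiv hXM hXN hMN hNM (algebraMap R[X] (Localization M) f) =
      substInvX (algebraMap R[X] (Localization N)) f :=
  IsLocalization.lift_eq _ f

end Localization

end Polynomial

theorem mem_onePlusXMulSubmonoid_iff {R : Type*} [CommRing R] {f : R[X]} :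
    f ∈ onePlusXMulSubmonoid R ↔ f.coeff 0 = 1 := by
  refine ⟨?_, fun hf => ⟨f.divX, ?_⟩⟩
  · rintro ⟨g, rfl⟩
    simp
  · conv_lhs => rw [← X_mul_divX_add f, hf, C_1, add_comm]

theorem X_mem_monicSubmonoid (R : Type*) [CommRing R] : X ∈ monicSubmonoid R :=
  monic_X

theorem reverse_mem_onePlusXMulSubmonoid_of_monic {R : Type*} [CommRing R] {f : R[X]}
    (hf : f.Monic) : f.reverse ∈ onePlusXMulSubmonoid R := by
  rw [mem_onePlusXMulSubmonoid_iff, coeff_zero_reverse, hf.leadingCoeff]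

theorem reverse_mem_monicSubmonoid_of_mem_sup_powers_X {R : Type*} [CommRing R] {f : R[X]}
    (hf : f ∈ onePlusXMulSubmonoid R ⊔ Submonoid.powers X) : f.reverse ∈ monicSubmonoid R := by
  obtain ⟨g, hg, _, ⟨n, rfl⟩, rfl⟩ := Submonoid.mem_sup.mp hf
  rw [reverse_mul_X_pow]
  exact monic_reverse_of_coeff_zero_eq_one (mem_onePlusXMulSubmonoid_iff.mp hg)

/-- **Localization of `R[t]` at monic polynomials as the localization at infinity.**
Inverting the monic polynomials in `R[t]` yields the same ring as localizing `R[x]` at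
`1 + xR[x]` and then inverting `x`: the assignment `t ↦ x⁻¹` induces a ring
isomorphism `S⁻¹R[t] ≅ (R[x]_{1+xR[x]})[1/x]`, the latter being the localization of
`R[x]` at the submonoid generated by `1 + xR[x]` and the powers of `x`. -/
theorem localization_monic_iso_localization_at_infinity (R : Type*) [CommRing R] :
    ∃ e : Localization (monicSubmonoid R) ≃+*
        Localization (onePlusXMulSubmonoid R ⊔ Submonoid.powers (X : Polynomial R)),
      (∀ r : R,
        e (algebraMap (Polynomial R) (Localization (monicSubmonoid R)) (C r)) =
          algebraMap (Polynomial R)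
            (Localization (onePlusXMulSubmonoid R ⊔ Submonoid.powers (X : Polynomial R)))
            (C r)) ∧
      e (algebraMap (Polynomial R) (Localization (monicSubmonoid R)) X) *
          algebraMap (Polynomial R)
            (Localization (onePlusXMulSubmonoid R ⊔ Submonoid.powers (X : Polynomial R)))
            X = 1 := by
  have hX : X ∈ onePlusXMulSubmonoid R ⊔ Submonoid.powers (X : R[X]) :=
    Submonoid.mem_sup_right (Submonoid.mem_powers X)
  refine ⟨localizationSubstInvXEquiv (X_mem_monicSubmonoid R) hX
    (fun f hf => Submonoid.mem_sup_left (reverse_mem_onePlusXMulSubmonoid_of_monic hf))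
    (fun f hf => reverse_mem_monicSubmonoid_of_mem_sup_powers_X hf), fun r => ?_, ?_⟩
  · rw [localizationSubstInvXEquiv_algebraMap, substInvX_C]
  · rw [localizationSubstInvXEquiv_algebraMap, substInvX_X,
      Ring.inverse_mul_cancel _ (IsLocalization.map_units _ ⟨X, hX⟩)]
end
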